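/- Let C = {c_1, …, c_n} ⊂ E³ be a finite set whose affine span is all of E³, and let P = B[c_1] ∩ … ∩ B[c_n] have nonempty interior. If every vertex of the farthest-point Voronoi tiling of C lies in the interior of P, then the truncated Delaunay complex of C equals the Delaunay complex of C; that is, for every I ⊆ {1, …, n}: there exist p ∈ E³ and ρ > 0 with ‖p−c_i‖ = ρ for all i ∈ I and ‖p−c_j‖ < ρ for all j ∉ I, if and only if there exist such p and ρ with, in addition, p ∈ P. -/

import Mathlib

open Set Metric MeasureTheory
open scoped RealInnerProductSpace

noncomputable section

/-- Euclidean 3-space. -/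
abbrev E3 : Type := EuclideanSpace ℝ (Fin 3)

/-- The intersection of the closed unit balls centered at the points `x k`. -/
def bpoly {f : ℕ} (x : Fin f → E3) : Set E3 := ⋂ k, closedBall (x k) 1

/-- The family of unit balls centered at the `x k` is reduced: removing any one ball
yields a strictly larger intersection. -/
def Reduced {f : ℕ} (x : Fin f → E3) : Prop :=
  ∀ k : Fin f, ¬ (⋂ j ∈ {j : Fin f | j ≠ k}, closedBall (x j) 1) ⊆ closedBall (x k) 1

/-- `x` generates a ball-polyhedron: the intersection of the unit balls centered at the `x k`
has nonempty interior and the family is reduced. -/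
def IsBallPolyhedron {f : ℕ} (x : Fin f → E3) : Prop :=
  (interior (bpoly x)).Nonempty ∧ Reduced x

/-- The face of the ball-polyhedron generated by `x` corresponding to the `k`-th ball. -/
def face {f : ℕ} (x : Fin f → E3) (k : Fin f) : Set E3 :=
  sphere (x k) 1 ∩ frontier (bpoly x)

/-- A vertex of the ball-polyhedron: a boundary point lying on at least three
generating unit spheres. -/
def IsVertex {f : ℕ} (x : Fin f → E3) (p : E3) : Prop :=
  p ∈ frontier (bpoly x) ∧ 3 ≤ {k : Fin f | p ∈ sphere (x k) 1}.ncard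

/-- An edge of the ball-polyhedron: a nondegenerate (more than one point) connected
component of the intersection of two faces. -/
def IsEdge {f : ℕ} (x : Fin f → E3) (e : Set E3) : Prop :=
  ∃ i k : Fin f, i ≠ k ∧ (∃ p ∈ e, e = connectedComponentIn (face x i ∩ face x k) p) ∧
    ∃ a ∈ e, ∃ b ∈ e, a ≠ b

/-- The elements of the vertex-edge-face structure of the ball-polyhedron generated by `x`
(including `∅` and the whole body), as a family of subsets of `E3` ordered by inclusion. -/
def latticeElems {f : ℕ} (x : Fin f → E3) : Set (Set E3) :=
  {s | s = ∅ ∨ s = bpoly x ∨ (∃ p, IsVertex x p ∧ s = {p}) ∨ IsEdge x s ∨ ∃ k, s = face x k}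

/-- A family of sets, partially ordered by inclusion, forms a lattice: any two members have a
least upper bound and a greatest lower bound within the family. -/
def IsLatticeFamily (L : Set (Set E3)) : Prop :=
  ∀ A ∈ L, ∀ B ∈ L,
    (∃ S ∈ L, A ⊆ S ∧ B ⊆ S ∧ ∀ T ∈ L, A ⊆ T → B ⊆ T → S ⊆ T) ∧
    (∃ S ∈ L, S ⊆ A ∧ S ⊆ B ∧ ∀ T ∈ L, T ⊆ A → T ⊆ B → T ⊆ S)

/-- A standard ball-polyhedron: a ball-polyhedron whose vertex-edge-face structure is a
lattice with respect to containment. -/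
def IsStandard {f : ℕ} (x : Fin f → E3) : Prop :=
  IsBallPolyhedron x ∧ IsLatticeFamily (latticeElems x)

/-- A combinatorial equivalence between two ball-polyhedra: an inclusion-preserving
bijection between their face lattices. -/
structure CombEquiv {f f' : ℕ} (x : Fin f → E3) (x' : Fin f' → E3) where
  toFun : Set E3 → Set E3
  invFun : Set E3 → Set E3
  mapsTo : ∀ s ∈ latticeElems x, toFun s ∈ latticeElems x'
  mapsTo' : ∀ s ∈ latticeElems x', invFun s ∈ latticeElems x
  left_inv : ∀ s ∈ latticeElems x, invFun (toFun s) = s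
  right_inv : ∀ s ∈ latticeElems x', toFun (invFun s) = s
  incl : ∀ s ∈ latticeElems x, ∀ t ∈ latticeElems x, (s ⊆ t ↔ toFun s ⊆ toFun t)

/-- The inner dihedral angle at a point `p` of an edge lying on the faces coming from the
unit balls centered at `xi` and `xk`: it is `π` minus the angle between `p - xi` and `p - xk`. -/
def dihedralAngleAt (xi xk p : E3) : ℝ :=
  Real.pi - InnerProductGeometry.angle (p - xi) (p - xk)

/-- Under the combinatorial equivalence `φ`, corresponding edges of the two ball-polyhedra
carry equal inner dihedral angles. -/
def EqualDihedralAngles {f f' : ℕ} (x : Fin f → E3) (x' : Fin f' → E3)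
    (φ : CombEquiv x x') : Prop :=
  ∀ e, IsEdge x e →
    ∀ i k : Fin f, i ≠ k → e ⊆ face x i → e ⊆ face x k →
    ∀ i' k' : Fin f', i' ≠ k' → φ.toFun e ⊆ face x' i' → φ.toFun e ⊆ face x' k' →
    ∀ p ∈ e, ∀ p' ∈ φ.toFun e,
      dihedralAngleAt (x i) (x k) p = dihedralAngleAt (x' i') (x' k') p'

/-- Under the combinatorial equivalence `φ`, corresponding edges of the two ball-polyhedra
have equal arc length (one-dimensional Hausdorff measure). -/
def EqualEdgeLengths {f f' : ℕ} (x : Fin f → E3) (x' : Fin f' → E3)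
    (φ : CombEquiv x x') : Prop :=
  ∀ e, IsEdge x e → μH[1] e = μH[1] (φ.toFun e)

/-- `u` is the direction of the tangent half-line of the arc `e` at its point `v`:
`u` is a unit vector and the normalized secant directions of `e` at `v` converge to `u`. -/
def IsTangentDirAt (e : Set E3) (v u : E3) : Prop :=
  ‖u‖ = 1 ∧ v ∈ closure (e \ {v}) ∧
    ∀ ε > 0, ∃ δ > 0, ∀ w ∈ e, w ≠ v → ‖w - v‖ < δ →
      ‖(‖w - v‖⁻¹ • (w - v)) - u‖ < ε

/-- Under the combinatorial equivalence `φ`, at corresponding vertices of corresponding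
faces, the face angles (angles between the tangent half-lines of the two edges of the face
meeting at the vertex) are equal. -/
def EqualFaceAngles {f f' : ℕ} (x : Fin f → E3) (x' : Fin f' → E3)
    (φ : CombEquiv x x') : Prop :=
  ∀ v v' : E3, IsVertex x v → φ.toFun {v} = {v'} →
  ∀ k : Fin f, ∀ k' : Fin f', φ.toFun (face x k) = face x' k' →
  ∀ e₁ e₂, IsEdge x e₁ → IsEdge x e₂ → e₁ ≠ e₂ →
    v ∈ e₁ → v ∈ e₂ → e₁ ⊆ face x k → e₂ ⊆ face x k →
  ∀ u₁ u₂ u₁' u₂' : E3, IsTangentDirAt e₁ v u₁ → IsTangentDirAt e₂ v u₂ →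
    IsTangentDirAt (φ.toFun e₁) v' u₁' → IsTangentDirAt (φ.toFun e₂) v' u₂' →
    InnerProductGeometry.angle u₁ u₂ = InnerProductGeometry.angle u₁' u₂'

/-- Two subsets of `E3` are congruent if an isometry of `E3` maps one onto the other. -/
def CongruentSets (A B : Set E3) : Prop := ∃ T : E3 ≃ᵢ E3, T '' A = B

/-- The farthest-point Voronoi cell of the point `c i`. -/
def vorCell {n : ℕ} (c : Fin n → E3) (i : Fin n) : Set E3 :=
  {p : E3 | ∀ j, dist p (c j) ≤ dist p (c i)}

/-- `F` is a `d`-dimensional face of the closed convex set `C`: a nonempty closed convex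
extreme subset of `C` whose affine span has dimension `d`. -/
def IsFaceOfDim (C F : Set E3) (d : ℕ) : Prop :=
  F.Nonempty ∧ IsExtreme ℝ C F ∧ Convex ℝ F ∧ IsClosed F ∧
    Module.finrank ℝ (vectorSpan ℝ F) = d

/-- `p` is a vertex of the farthest-point Voronoi tiling of `c`:
a `0`-dimensional face of one of the cells. -/
def IsVorVertex {n : ℕ} (c : Fin n → E3) (p : E3) : Prop :=
  ∃ i, IsFaceOfDim (vorCell c i) {p} 0

/-- `e` is an edge of the farthest-point Voronoi tiling of `c`:
a `1`-dimensional face of one of the cells. -/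
def IsVorEdge {n : ℕ} (c : Fin n → E3) (e : Set E3) : Prop :=
  ∃ i, IsFaceOfDim (vorCell c i) e 1

/-- `F` is a face of the farthest-point Voronoi tiling of `c`:
a `2`-dimensional face of one of the cells. -/
def IsVorFace {n : ℕ} (c : Fin n → E3) (F : Set E3) : Prop :=
  ∃ i, IsFaceOfDim (vorCell c i) F 2

/-- The index set `I` spans a member `conv {c i : i ∈ I}` of the farthest-point Delaunay
complex of `c`: some point `p` has all points of `I` at the same distance `ρ` and
all other points strictly closer. -/
def DelaunayIndex {n : ℕ} (c : Fin n → E3) (I : Set (Fin n)) : Prop :=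
  ∃ p : E3, ∃ ρ : ℝ, 0 < ρ ∧ (∀ i ∈ I, dist p (c i) = ρ) ∧ ∀ j ∉ I, dist p (c j) < ρ

/-- A normal ball-polyhedron: a ball-polyhedron whose centers affinely span `E3` and such
that every vertex of the farthest-point Voronoi tiling of the centers lies in the interior
of the ball-polyhedron. -/
def IsNormal {f : ℕ} (x : Fin f → E3) : Prop :=
  IsBallPolyhedron x ∧ affineSpan ℝ (Set.range x) = ⊤ ∧
    ∀ p : E3, IsVorVertex x p → p ∈ interior (bpoly x)

/-- A cyclic sequence of reals has at least four sign changes (ignoring zeros):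
there are four cyclically ordered positions with alternating strict signs. -/
def AtLeastFourSignChanges {n : ℕ} (a : Fin n → ℝ) : Prop :=
  ∃ j₁ j₂ j₃ j₄ : Fin n, j₁ < j₂ ∧ j₂ < j₃ ∧ j₃ < j₄ ∧
    ((0 < a j₁ ∧ a j₂ < 0 ∧ 0 < a j₃ ∧ a j₄ < 0) ∨
     (a j₁ < 0 ∧ 0 < a j₂ ∧ a j₃ < 0 ∧ 0 < a j₄))

/-- The face angle of the ball-polyhedron generated by `x` at the vertex `v` of the face
`face x k`: the angle between the tangent half-lines at `v` of the two edges of that face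
meeting at `v`. -/
noncomputable def faceAngle {f : ℕ} (x : Fin f → E3) (k : Fin f) (v : E3) : ℝ :=
  Classical.epsilon fun θ : ℝ =>
    ∃ e₁ e₂ u₁ u₂, IsEdge x e₁ ∧ IsEdge x e₂ ∧ e₁ ≠ e₂ ∧
      v ∈ e₁ ∧ v ∈ e₂ ∧ e₁ ⊆ face x k ∧ e₂ ⊆ face x k ∧
      IsTangentDirAt e₁ v u₁ ∧ IsTangentDirAt e₂ v u₂ ∧
      θ = InnerProductGeometry.angle u₁ u₂

/-!
Fix `i ∈ I`. The witnesses for `I` are the points of the Voronoi cell of `c i`, a polyhedron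
cut out by the linear constraints `dist x (c j) ≤ dist x (c i)`, at which exactly the constraints
indexed by `I` are tight. Since the `c j - c i` span the space, this polyhedron has a vertex `v`
with all constraints of `I` tight, and `v` lies in the interior of `P` by hypothesis. On the open
segment from `v` to a witness `p` the tight constraints are those tight at both ends, namely `I`,
so the points of that segment close to `v` are witnesses lying in `P`.
-/

open AffineMap Filter Topology

variable {E ι : Type*}

section Polyhedron

variable [AddCommGroup E] [Module ℝ E]

def polyhedron (f : ι → E →ₗ[ℝ] ℝ) (b : ι → ℝ) : Set E := {x | ∀ j, f j x ≤ b j}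

def tightSet (f : ι → E →ₗ[ℝ] ℝ) (b : ι → ℝ) (x : E) : Set ι := {j | f j x = b j}

variable {f : ι → E →ₗ[ℝ] ℝ} {b : ι → ℝ} {x y v d : E}

lemma convex_polyhedron : Convex ℝ (polyhedron f b) := by
  simp only [polyhedron, ofPred_forall]
  exact convex_iInter fun j => convex_halfSpace_le (f j).isLinear (b j)

lemma tightSet_lineMap (hx : x ∈ polyhedron f b) (hy : y ∈ polyhedron f b) {t : ℝ}
    (ht : t ∈ Ioo 0 1) :
    tightSet f b (lineMap x y t) = tightSet f b x ∩ tightSet f b y := by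
  ext j
  have hxj := hx j
  have hyj := hy j
  simp only [tightSet, mem_ofPred_eq, mem_inter_iff, lineMap_apply_module, map_add, map_smul,
    smul_eq_mul]
  obtain ⟨ht0, ht1⟩ := ht
  constructor
  · intro h
    constructor <;> nlinarith
  · rintro ⟨hxj', hyj'⟩
    rw [hxj', hyj']
    ring

lemma isExtreme_polyhedron_sep_tightSet (T : Set ι) :
    IsExtreme ℝ (polyhedron f b) {x ∈ polyhedron f b | T ⊆ tightSet f b x} := by
  refine ⟨sep_subset _ _, fun x₁ hx₁ x₂ hx₂ x ⟨_, hxT⟩ hseg => ?_⟩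
  rw [openSegment_eq_image_lineMap] at hseg
  obtain ⟨t, ht, rfl⟩ := hseg
  rw [tightSet_lineMap hx₁ hx₂ ht, subset_inter_iff] at hxT
  exact ⟨hx₁, hxT.1⟩

/-- Moving from `v` in a direction `d` parallel to the constraints tight at `v`, the first
constraint hit is a new tight one. -/
lemma exists_tightSet_ssubset [Finite ι] (hv : v ∈ polyhedron f b)
    (hd : ∀ j ∈ tightSet f b v, f j d = 0) {k : ι} (hk : 0 < f k d) :
    ∃ w ∈ polyhedron f b, tightSet f b v ⊂ tightSet f b w := by
  obtain ⟨m, hm, hmin⟩ := Set.exists_min_image {j | 0 < f j d}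
    (fun j => (b j - f j v) / f j d) (toFinite _) ⟨k, hk⟩
  set s := (b m - f m v) / f m d
  have hs : 0 ≤ s := div_nonneg (sub_nonneg.mpr (hv m)) hm.le
  have hfw : ∀ j, f j (v + s • d) = f j v + s * f j d := fun j => by simp
  refine ⟨v + s • d, fun j => ?_, ?_⟩
  · rw [hfw]
    rcases lt_or_ge 0 (f j d) with hj | hj
    · have := (le_div_iff₀ hj).mp (hmin j hj)
      linarith
    · nlinarith [hv j]
  · refine (ssubset_iff_of_subset fun j hj => ?_).mpr ⟨m, ?_, fun hm' => hm.ne' (hd m hm')⟩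
    · show f j (v + s • d) = b j
      rw [hfw, hd j hj, mul_zero, add_zero]
      exact hj
    · simp only [tightSet, mem_ofPred_eq, hfw, s]
      rw [div_mul_cancel₀ _ (ne_of_gt hm)]
      ring

/-- A point with an inclusion-maximal tight set is a vertex: otherwise a direction parallel to
its tight constraints but not to all constraints leads to a larger tight set. -/
theorem exists_isExtreme_singleton_polyhedron [Finite ι] (hf : ∀ d, (∀ j, f j d = 0) → d = 0)
    {T : Set ι} {x₀ : E} (hx₀ : x₀ ∈ polyhedron f b) (hT : T ⊆ tightSet f b x₀) :
    ∃ v ∈ polyhedron f b, T ⊆ tightSet f b v ∧ IsExtreme ℝ (polyhedron f b) {v} := by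
  obtain ⟨v, ⟨hv, hTv⟩, hmax⟩ := Set.Finite.exists_maximalFor' (tightSet f b)
    {x ∈ polyhedron f b | T ⊆ tightSet f b x} (toFinite _) ⟨x₀, hx₀, hT⟩
  have hface : {x ∈ polyhedron f b | tightSet f b v ⊆ tightSet f b x} = {v} := by
    refine eq_singleton_iff_unique_mem.mpr ⟨⟨hv, subset_rfl⟩, fun x ⟨hx, hvx⟩ => ?_⟩
    by_contra hne
    have hd : ∀ j ∈ tightSet f b v, f j (x - v) = 0 := fun j hj => by
      rw [map_sub, hvx hj, hj, sub_self]
    obtain ⟨k, hk⟩ : ∃ k, f k (x - v) ≠ 0 := by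
      by_contra! h
      exact hne (sub_eq_zero.mp (hf _ h))
    obtain ⟨w, hw, hvw⟩ : ∃ w ∈ polyhedron f b, tightSet f b v ⊂ tightSet f b w := by
      rcases hk.lt_or_gt with hneg | hpos
      · exact exists_tightSet_ssubset (d := -(x - v)) hv
          (fun j hj => by rw [map_neg, hd j hj, neg_zero]) (by simpa using hneg)
      · exact exists_tightSet_ssubset hv hd hpos
    exact hvw.not_subset (hmax ⟨hw, hTv.trans hvw.subset⟩ hvw.subset)
  exact ⟨v, hv, hTv, hface ▸ isExtreme_polyhedron_sep_tightSet _⟩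

end Polyhedron

lemma exists_lineMap_mem_of_mem_interior [AddCommGroup E] [Module ℝ E] [TopologicalSpace E]
    [IsTopologicalAddGroup E] [ContinuousSMul ℝ E] {S : Set E} {v : E} (hv : v ∈ interior S)
    (p : E) : ∃ t ∈ Ioo (0 : ℝ) 1, lineMap v p t ∈ S := by
  have hlim : Tendsto (fun t : ℝ => lineMap v p t) (𝓝[>] 0) (𝓝 v) :=
    (lineMap_continuous.tendsto' 0 v (by simp)).mono_left nhdsWithin_le_nhds
  obtain ⟨t, ht, htS⟩ := Filter.nonempty_of_mem
    (inter_mem (Ioo_mem_nhdsGT one_pos) (hlim (isOpen_interior.mem_nhds hv)))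
  exact ⟨t, ht, interior_subset htS⟩

def IsDelaunayWitness [PseudoMetricSpace E] (c : ι → E) (I : Set ι) (p : E) : Prop :=
  ∃ ρ : ℝ, 0 < ρ ∧ (∀ i ∈ I, dist p (c i) = ρ) ∧ ∀ j ∉ I, dist p (c j) < ρ

section Farthest

variable [NormedAddCommGroup E] [InnerProductSpace ℝ E] {c : ι → E} {i j : ι} {x : E}

/-- `dist x (c j) ≤ dist x (c i)` is the linear constraint
`farthestFun c i j x ≤ farthestBound c i j`. -/
def farthestFun (c : ι → E) (i j : ι) : E →ₗ[ℝ] ℝ := innerₛₗ ℝ (c i - c j)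

def farthestBound (c : ι → E) (i j : ι) : ℝ := (‖c i‖ ^ 2 - ‖c j‖ ^ 2) / 2

lemma farthestBound_sub_farthestFun (c : ι → E) (i j : ι) (x : E) :
    farthestBound c i j - farthestFun c i j x = (dist x (c i) ^ 2 - dist x (c j) ^ 2) / 2 := by
  simp only [farthestBound, farthestFun, innerₛₗ_apply_apply, dist_eq_norm, norm_sub_sq_real,
    real_inner_comm x, inner_sub_right]
  ring

lemma farthestFun_le_iff :
    farthestFun c i j x ≤ farthestBound c i j ↔ dist x (c j) ≤ dist x (c i) := by
  have h := farthestBound_sub_farthestFun c i j x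
  rw [← sq_le_sq₀ dist_nonneg dist_nonneg]
  constructor <;> intro <;> linarith

lemma farthestFun_eq_iff :
    farthestFun c i j x = farthestBound c i j ↔ dist x (c j) = dist x (c i) := by
  have h := farthestBound_sub_farthestFun c i j x
  rw [← sq_eq_sq₀ dist_nonneg dist_nonneg]
  constructor <;> intro <;> linarith

lemma mem_polyhedron_farthest_iff :
    x ∈ polyhedron (farthestFun c i) (farthestBound c i) ↔ ∀ j, dist x (c j) ≤ dist x (c i) :=
  forall_congr' fun _ => farthestFun_le_iff

lemma mem_tightSet_farthest_iff :
    j ∈ tightSet (farthestFun c i) (farthestBound c i) x ↔ dist x (c j) = dist x (c i) :=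
  farthestFun_eq_iff

lemma eq_zero_of_farthestFun_eq_zero (hspan : affineSpan ℝ (range c) = ⊤) (i : ι) :
    ∀ d : E, (∀ j, farthestFun c i j d = 0) → d = 0 := by
  intro d hd
  have hspan' : Submodule.span ℝ (range fun j => c j -ᵥ c i) = ⊤ := by
    rw [← vectorSpan_range_eq_span_range_vsub_right, ← direction_affineSpan, hspan,
      AffineSubspace.direction_top]
  have hd' : innerₛₗ ℝ d = 0 := LinearMap.ext_on_range hspan' fun j => by
    have hdj := hd j
    simp only [farthestFun, innerₛₗ_apply_apply, inner_sub_left] at hdj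
    simp only [LinearMap.zero_apply, innerₛₗ_apply_apply, vsub_eq_sub, inner_sub_right]
    linarith [real_inner_comm d (c i), real_inner_comm d (c j)]
  exact inner_self_eq_zero.mp (LinearMap.congr_fun hd' d)

lemma dist_pos_of_forall_dist_le [Nontrivial E]
    (hker : ∀ d, (∀ j, farthestFun c i j d = 0) → d = 0)
    (hx : ∀ j, dist x (c j) ≤ dist x (c i)) : 0 < dist x (c i) := by
  by_contra! h
  have hc : ∀ j, c j = x := fun j => (dist_le_zero.mp ((hx j).trans h)).symm
  obtain ⟨d, hd⟩ := exists_ne (0 : E)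
  exact hd (hker d fun j => by simp [farthestFun, hc])

lemma isDelaunayWitness_iff [Nontrivial E]
    (hker : ∀ d, (∀ j, farthestFun c i j d = 0) → d = 0) {I : Set ι} (hi : i ∈ I) :
    IsDelaunayWitness c I x ↔ x ∈ polyhedron (farthestFun c i) (farthestBound c i) ∧
      tightSet (farthestFun c i) (farthestBound c i) x = I := by
  simp only [mem_polyhedron_farthest_iff, Set.ext_iff, mem_tightSet_farthest_iff]
  constructor
  · rintro ⟨ρ, -, hI, hIc⟩
    have hxi := hI i hi
    refine ⟨fun j => ?_, fun j => ⟨fun hj => by_contra fun hjI => ?_, fun hj => ?_⟩⟩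
    · by_cases hj : j ∈ I
      · rw [hI j hj, hxi]
      · exact hxi ▸ (hIc j hj).le
    · exact (hIc j hjI).ne (hj.trans hxi)
    · rw [hI j hj, hxi]
  · rintro ⟨hle, hI⟩
    refine ⟨dist x (c i), dist_pos_of_forall_dist_le hker hle, fun j hj => (hI j).mpr hj,
      fun j hj => (hle j).lt_of_ne fun h => hj ((hI j).mp h)⟩

end Farthest

lemma vorCell_eq_polyhedron {n : ℕ} (c : Fin n → E3) (i : Fin n) :
    vorCell c i = polyhedron (farthestFun c i) (farthestBound c i) := by
  ext x
  exact mem_polyhedron_farthest_iff.symm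

lemma isVorVertex_of_isExtreme {n : ℕ} {c : Fin n → E3} {i : Fin n} {v : E3}
    (h : IsExtreme ℝ (vorCell c i) {v}) : IsVorVertex c v :=
  ⟨i, singleton_nonempty v, h, convex_singleton v, isClosed_singleton, by
    rw [vectorSpan_singleton, finrank_bot]⟩

theorem exists_isDelaunayWitness_mem_bpoly {n : ℕ} {c : Fin n → E3}
    (hspan : affineSpan ℝ (range c) = ⊤)
    (hvert : ∀ p : E3, IsVorVertex c p → p ∈ interior (bpoly c))
    {I : Set (Fin n)} (hI : I.Nonempty) {p : E3} (hp : IsDelaunayWitness c I p) :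
    ∃ q ∈ bpoly c, IsDelaunayWitness c I q := by
  obtain ⟨i, hi⟩ := hI
  have hker := eq_zero_of_farthestFun_eq_zero hspan i
  rw [isDelaunayWitness_iff hker hi] at hp
  obtain ⟨v, hv, hIv, hext⟩ := exists_isExtreme_singleton_polyhedron hker hp.1 hp.2.ge
  have hvint := hvert v (isVorVertex_of_isExtreme (vorCell_eq_polyhedron c i ▸ hext))
  obtain ⟨t, ht, hq⟩ := exists_lineMap_mem_of_mem_interior hvint p
  refine ⟨lineMap v p t, hq, (isDelaunayWitness_iff hker hi).mpr ⟨?_, ?_⟩⟩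
  · exact convex_polyhedron.lineMap_mem hv hp.1 (Ioo_subset_Icc_self ht)
  · rw [tightSet_lineMap hv hp.1 ht, hp.2, inter_eq_right.mpr hIv]

/-- If the centers `c` affinely span `E3`, the intersection `P` of the unit balls around them
has nonempty interior, and every vertex of the farthest-point Voronoi tiling of `c` lies in
the interior of `P`, then the truncated Delaunay complex equals the Delaunay complex: for
every index set `I`, a witness point for `I` exists iff a witness point inside `P` exists. -/
theorem truncated_delaunay_eq_delaunay {n : ℕ} (c : Fin n → E3)
    (hspan : affineSpan ℝ (Set.range c) = ⊤)
    (hint : (interior (bpoly c)).Nonempty)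
    (hvert : ∀ p : E3, IsVorVertex c p → p ∈ interior (bpoly c)) :
    ∀ I : Set (Fin n),
      (∃ p : E3, ∃ ρ : ℝ, 0 < ρ ∧ (∀ i ∈ I, dist p (c i) = ρ) ∧
          ∀ j ∉ I, dist p (c j) < ρ) ↔
      (∃ p ∈ bpoly c, ∃ ρ : ℝ, 0 < ρ ∧ (∀ i ∈ I, dist p (c i) = ρ) ∧
          ∀ j ∉ I, dist p (c j) < ρ) := by
  intro I
  refine ⟨fun ⟨p, hp⟩ => ?_, fun ⟨p, _, hp⟩ => ⟨p, hp⟩⟩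
  rcases I.eq_empty_or_nonempty with rfl | hI
  · obtain ⟨q, hq⟩ := hint
    have hqP := interior_subset hq
    refine ⟨q, hqP, 2, two_pos, fun i hi => hi.elim, fun j _ => ?_⟩
    exact (mem_closedBall.mp (mem_iInter.mp hqP j)).trans_lt one_lt_two
  · exact exists_isDelaunayWitness_mem_bpoly hspan hvert hI hp
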